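/- Let n ≥ 1, let L₁,…,Lₙ > 0, S > 0, t > 0, and let μ be the product on ℝⁿ of n copies of the exponential distribution with rate 1. Then the function P ↦ Pⁿ · μ{λ ∈ ℝⁿ : ∑_{i=1}^n Lᵢ·log₂(1 + S·λᵢ·P) < t} is monotone nondecreasing on (0, ∞); that is, for all 0 < P ≤ P′, Pⁿ · μ{λ : ∑ Lᵢ·log₂(1 + S·λᵢ·P) < t} ≤ (P′)ⁿ · μ{λ : ∑ Lᵢ·log₂(1 + S·λᵢ·P′) < t}. -/

import Mathlib

open MeasureTheory ProbabilityTheory Real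
open scoped ENNReal

/-!
If `λ` has i.i.d. `Exp(1)` coordinates, then `Pλ` has density `P⁻ⁿ e^{-∑ uᵢ / P}` on the positive
orthant, so `Pⁿ μ {λ | Pλ ∈ B} = ∫_B e^{-∑ uᵢ / P} du`, which increases with `P` for every
`B ⊆ ℝⁿ`. Coordinatewise, `P` times the law of `Pλᵢ` is the measure with density `e^{-u/P}` on
`[0, ∞)`, and these measures increase with `P`.
-/

namespace MeasureTheory.Measure

variable {ι : Type*} [Fintype ι] {X : ι → Type*} [∀ i, MeasurableSpace (X i)]

theorem pi_mono {μ ν : ∀ i, Measure (X i)} [∀ i, SigmaFinite (μ i)] [∀ i, SigmaFinite (ν i)]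
    (h : ∀ i, μ i ≤ ν i) : Measure.pi μ ≤ Measure.pi ν := by
  have : (Measure.pi μ).toOuterMeasure ≤ OuterMeasure.pi fun i => (ν i).toOuterMeasure :=
    OuterMeasure.le_pi.2 fun t _ => by
      rw [coe_toOuterMeasure, pi_pi]
      exact Finset.prod_le_prod' fun i _ => h i (t i)
  refine le_iff.2 fun s hs => (this s).trans_eq ?_
  rw [pi_def, toMeasure_apply _ _ hs]

theorem pi_smul (μ : ∀ i, Measure (X i)) [∀ i, IsFiniteMeasure (μ i)] {c : ι → ℝ≥0∞}
    (hc : ∀ i, c i ≠ ∞) : Measure.pi (fun i => c i • μ i) = (∏ i, c i) • Measure.pi μ := by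
  have := fun i => (μ i).smul_finite (hc i)
  refine pi_eq fun s _ => ?_
  simp only [smul_apply, pi_pi, smul_eq_mul, Finset.prod_mul_distrib]

end MeasureTheory.Measure

theorem Real.map_const_mul_withDensity {f : ℝ → ℝ≥0∞} (hf : Measurable f) {c : ℝ} (hc : c ≠ 0) :
    (volume.withDensity f).map (c * ·) =
      ENNReal.ofReal |c⁻¹| • volume.withDensity fun y => f (c⁻¹ * y) := by
  ext s hs
  have hmul : Measurable (c * · : ℝ → ℝ) := measurable_const_mul c
  rw [Measure.map_apply hmul hs, withDensity_apply _ (hmul hs), Measure.smul_apply,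
    withDensity_apply _ hs, ← lintegral_smul_measure, ← Measure.restrict_smul,
    ← Real.map_volume_mul_left hc,
    setLIntegral_map (f := fun y => f (c⁻¹ * y)) hs (hf.comp (measurable_const_mul _)) hmul]
  simp only [inv_mul_cancel_left₀ hc]

namespace ProbabilityTheory

theorem exponentialPDF_antitoneOn (r : ℝ) : AntitoneOn (exponentialPDF r) (Set.Ici 0) := by
  intro x hx y hy hxy
  rw [exponentialPDF_of_nonneg hx, exponentialPDF_of_nonneg hy]
  rcases le_or_gt 0 r with hr | hr
  · gcongr
  · simp [ENNReal.ofReal_of_nonpos (mul_nonpos_of_nonpos_of_nonneg hr.le (exp_pos _).le)]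

theorem smul_map_const_mul_expMeasure (r : ℝ) {c : ℝ} (hc : 0 < c) :
    ENNReal.ofReal c • (expMeasure r).map (c * ·) =
      volume.withDensity fun y => exponentialPDF r (c⁻¹ * y) := by
  have hexp : expMeasure r = volume.withDensity (exponentialPDF r) := rfl
  rw [hexp, Real.map_const_mul_withDensity (f := exponentialPDF r)
    (measurable_exponentialPDFReal r).ennreal_ofReal hc.ne',
    smul_smul, abs_of_pos (inv_pos.2 hc), ← ENNReal.ofReal_mul hc.le, mul_inv_cancel₀ hc.ne',
    ENNReal.ofReal_one, one_smul]

theorem smul_map_const_mul_expMeasure_mono (r : ℝ) {c c' : ℝ} (hc : 0 < c) (hcc' : c ≤ c') :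
    ENNReal.ofReal c • (expMeasure r).map (c * ·) ≤
      ENNReal.ofReal c' • (expMeasure r).map (c' * ·) := by
  have hc' : 0 < c' := hc.trans_le hcc'
  rw [smul_map_const_mul_expMeasure r hc, smul_map_const_mul_expMeasure r hc']
  refine withDensity_mono (ae_of_all _ fun y => ?_)
  dsimp only
  rcases le_or_gt 0 y with hy | hy
  · exact exponentialPDF_antitoneOn r (Set.mem_Ici.2 (by positivity))
      (Set.mem_Ici.2 (by positivity)) (by gcongr)
  · rw [exponentialPDF_of_neg (mul_neg_of_pos_of_neg (inv_pos.2 hc) hy)]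
    exact zero_le

variable {ι : Type*} [Fintype ι] {r : ℝ}

theorem ofReal_pow_mul_pi_expMeasure_preimage_smul (hr : 0 < r) {c : ℝ} (hc : 0 < c)
    (B : Set (ι → ℝ)) :
    ENNReal.ofReal (c ^ Fintype.card ι) * Measure.pi (fun _ => expMeasure r) ((c • ·) ⁻¹' B) =
      Measure.pi (fun _ : ι => ENNReal.ofReal c • (expMeasure r).map (c * ·)) B := by
  have := isProbabilityMeasure_expMeasure hr
  have hmap : (Measure.pi fun _ : ι => expMeasure r).map (c • ·) =
      Measure.pi fun _ : ι => (expMeasure r).map (c * ·) :=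
    Measure.pi_map_pi fun _ => (measurable_const_mul c).aemeasurable
  rw [← MeasurableEquiv.coe_smul₀ hc.ne', ← MeasurableEquiv.map_apply, MeasurableEquiv.coe_smul₀,
    hmap, Measure.pi_smul _ fun _ => ENNReal.ofReal_ne_top, Finset.prod_const, Finset.card_univ,
    Measure.smul_apply, smul_eq_mul, ENNReal.ofReal_pow hc.le]

theorem ofReal_pow_mul_pi_expMeasure_preimage_smul_mono (hr : 0 < r) {c c' : ℝ} (hc : 0 < c)
    (hcc' : c ≤ c') (B : Set (ι → ℝ)) :
    ENNReal.ofReal (c ^ Fintype.card ι) * Measure.pi (fun _ => expMeasure r) ((c • ·) ⁻¹' B) ≤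
      ENNReal.ofReal (c' ^ Fintype.card ι) *
        Measure.pi (fun _ => expMeasure r) ((c' • ·) ⁻¹' B) := by
  have hc' : 0 < c' := hc.trans_le hcc'
  rw [ofReal_pow_mul_pi_expMeasure_preimage_smul hr hc,
    ofReal_pow_mul_pi_expMeasure_preimage_smul hr hc']
  have := isProbabilityMeasure_expMeasure hr
  have (c : ℝ) : IsFiniteMeasure (ENNReal.ofReal c • (expMeasure r).map (c * ·)) :=
    Measure.smul_finite _ ENNReal.ofReal_ne_top
  exact Measure.pi_mono (fun _ => smul_map_const_mul_expMeasure_mono r hc hcc') B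

end ProbabilityTheory

theorem bound_monotone_in_P_general
    (n : ℕ) (L : Fin n → ℝ)
    (S t : ℝ)
    (μ : Measure (Fin n → ℝ))
    (hμ : μ = Measure.pi fun _ : Fin n => expMeasure 1) :
    ∀ P P' : ℝ, 0 < P → P ≤ P' →
      ENNReal.ofReal (P ^ n) *
          μ {lam : Fin n → ℝ | ∑ i, L i * Real.logb 2 (1 + S * lam i * P) < t}
        ≤ ENNReal.ofReal (P' ^ n) *
          μ {lam : Fin n → ℝ | ∑ i, L i * Real.logb 2 (1 + S * lam i * P') < t} := by
  intro P P' hP hPP'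
  let B := {u : Fin n → ℝ | ∑ i, L i * Real.logb 2 (1 + S * u i) < t}
  have hB (Q : ℝ) : {lam : Fin n → ℝ | ∑ i, L i * Real.logb 2 (1 + S * lam i * Q) < t} =
      (Q • ·) ⁻¹' B := by
    ext lam
    simp only [B, Set.mem_ofPred_eq, Set.mem_preimage, Pi.smul_apply, smul_eq_mul, mul_assoc,
      mul_comm (lam _) Q]
  rw [hB, hB, hμ]
  simpa only [Fintype.card_fin] using
    ofReal_pow_mul_pi_expMeasure_preimage_smul_mono one_pos hP hPP' B

theorem bound_monotone_in_P
    (n : ℕ) (hn : 1 ≤ n) (L : Fin n → ℝ) (hL : ∀ i, 0 < L i)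
    (S t : ℝ) (hS : 0 < S) (ht : 0 < t)
    (μ : Measure (Fin n → ℝ))
    (hμ : μ = Measure.pi fun _ : Fin n => expMeasure 1) :
    ∀ P P' : ℝ, 0 < P → P ≤ P' →
      ENNReal.ofReal (P ^ n) *
          μ {lam : Fin n → ℝ | ∑ i, L i * Real.logb 2 (1 + S * lam i * P) < t}
        ≤ ENNReal.ofReal (P' ^ n) *
          μ {lam : Fin n → ℝ | ∑ i, L i * Real.logb 2 (1 + S * lam i * P') < t} :=
  bound_monotone_in_P_general n L S t μ hμ
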